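/- (Completeness and involutivity of the set {P_a, p̂·s}.) On {(x,p,s) ∈ Γ : p ≠ 0} define h(x,p,s) := (p·s)/|p|. Then {P_a, P_b} = 0 and {P_a, h} = 0 for all a,b (the functions P_1, P_2, P_3, h are in involution), and the set is complete: every C¹ function f on {(x,p,s) ∈ Γ : p ≠ 0} satisfying {P_a, f} = 0 for all a and {h, f} = 0 depends on phase space only through p, (p·s)/|p| and |s|, i.e. there exists a function F : ℝ³ × ℝ × ℝ → ℝ with f(x,p,s) = F(p, (p·s)/|p|, |s|) for all (x,p,s) with p ≠ 0. -/

import Mathlib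

noncomputable section

open Finset

abbrev R3 := Fin 3 → ℝ

/-- The spin phase space Γ = ℝ³ × ℝ³ × ℝ³ with points (x, p, s). -/
abbrev Phase := R3 × R3 × R3

/-- Euclidean dot product on ℝ³. -/
def dot3 (v w : R3) : ℝ := ∑ a, v a * w a

/-- Euclidean norm on ℝ³. -/
def norm3 (v : R3) : ℝ := Real.sqrt (dot3 v v)

/-- Cross product on ℝ³. -/
def cross3 (v w : R3) : R3 :=
  ![v 1 * w 2 - v 2 * w 1, v 2 * w 0 - v 0 * w 2, v 0 * w 1 - v 1 * w 0]

/-- Kronecker delta. -/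
def kdelta (a b : Fin 3) : ℝ := if a = b then 1 else 0

/-- Sign of an integer, valued in ℝ. -/
def isgn (x : ℤ) : ℝ := if 0 < x then 1 else if x < 0 then -1 else 0

/-- Totally antisymmetric symbol on three indices with ε₀₁₂ = +1. -/
def eps3 (a b c : Fin 3) : ℝ :=
  isgn (((b : ℕ) : ℤ) - ((a : ℕ) : ℤ)) * isgn (((c : ℕ) : ℤ) - ((a : ℕ) : ℤ)) *
  isgn (((c : ℕ) : ℤ) - ((b : ℕ) : ℤ))

/-- Gradient of f with respect to x. -/
def dX (f : Phase → ℝ) (γ : Phase) : R3 := fun a => fderiv ℝ f γ (Pi.single a 1, 0, 0)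

/-- Gradient of f with respect to p. -/
def dP (f : Phase → ℝ) (γ : Phase) : R3 := fun a => fderiv ℝ f γ (0, Pi.single a 1, 0)

/-- Gradient of f with respect to s. -/
def dS (f : Phase → ℝ) (γ : Phase) : R3 := fun a => fderiv ℝ f γ (0, 0, Pi.single a 1)

/-- Poisson bracket {f,g} = ∇ₓf·∇ₚg − ∇ₚf·∇ₓg + s·(∇ₛf × ∇ₛg) on Γ. -/
def pb (f g : Phase → ℝ) (γ : Phase) : ℝ :=
  dot3 (dX f γ) (dP g γ) - dot3 (dP f γ) (dX g γ)
    + dot3 γ.2.2 (cross3 (dS f γ) (dS g γ))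

/-- Generator of spatial translations: P_a(x,p,s) = p_a. -/
def Pgen (a : Fin 3) : Phase → ℝ := fun γ => γ.2.1 a

/-- Generator of rotations: J_ab(x,p,s) = x_a p_b − x_b p_a + ε_{abc} s_c. -/
def Jgen (a b : Fin 3) : Phase → ℝ :=
  fun γ => γ.1 a * γ.2.1 b - γ.1 b * γ.2.1 a + ∑ c, eps3 a b c * γ.2.2 c

/-- The subset of phase space where the momentum is nonzero. -/
def PhaseStar : Set Phase := {γ | γ.2.1 ≠ 0}

/-- The function h(x,p,s) = (p·s)/|p| (the helicity-type invariant p̂·s). -/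
def hfun : Phase → ℝ := fun γ => dot3 γ.2.1 γ.2.2 / norm3 γ.2.1

/-! {P_a, g} = -∂g/∂x_a, so the first two brackets vanish because neither P_b nor h depends on x,
and a function in involution with every P_a does not depend on x either. Then
{h, f} = -∇_s f · (p̂ × s) is the derivative of f along the rotation of s about the axis p̂.
Two spins with the same p̂·s and |s| differ by such a rotation (Rodrigues' formula, the angle being
read off in the orthogonal frame u, p̂ × u of the plane p̂^⊥), so f is constant on these circles
and factors through (p, p̂·s, |s|). -/

open Matrix

lemma dot3_eq_dotProduct (v w : R3) : dot3 v w = v ⬝ᵥ w := rfl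

lemma cross3_eq_crossProduct (v w : R3) : cross3 v w = v ⨯₃ w := rfl

lemma exists_cos_sin_eq {c d : ℝ} (h : c ^ 2 + d ^ 2 = 1) :
    ∃ t : ℝ, Real.cos t = c ∧ Real.sin t = d := by
  have hz : ‖(⟨c, d⟩ : ℂ)‖ = 1 := by
    rw [← pow_eq_one_iff_of_nonneg (norm_nonneg _) two_ne_zero, Complex.sq_norm,
      Complex.normSq_mk]
    linear_combination h
  obtain ⟨t, ht⟩ := (Complex.norm_eq_one_iff _).1 hz
  exact ⟨t, by simpa using congrArg Complex.re ht, by simpa using congrArg Complex.im ht⟩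

lemma triple_product_smul_eq {R : Type*} [CommRing R] (a b c x : Fin 3 → R) :
    (a ⬝ᵥ b ⨯₃ c) • x = (x ⬝ᵥ b ⨯₃ c) • a + (x ⬝ᵥ c ⨯₃ a) • b + (x ⬝ᵥ a ⨯₃ b) • c := by
  ext i
  fin_cases i <;> simp [cross_apply, dotProduct, Fin.sum_univ_three] <;> ring

lemma dotProduct_self_smul_eq_of_orthogonal {R : Type*} [CommRing R] {n u x : Fin 3 → R}
    (hn : n ⬝ᵥ n = 1) (hu : n ⬝ᵥ u = 0) (hx : n ⬝ᵥ x = 0) :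
    (u ⬝ᵥ u) • x = (x ⬝ᵥ u) • u + (x ⬝ᵥ n ⨯₃ u) • n ⨯₃ u := by
  have h := triple_product_smul_eq n u (n ⨯₃ u) x
  rw [cross_cross_eq_smul_sub_smul', cross_cross_eq_smul_sub_smul] at h
  simpa [dotProduct_comm x n, dotProduct_comm u n, hn, hu, hx] using h

section Rotation

variable {n u x : R3}

lemma exists_cos_smul_add_sin_smul_eq (hn : n ⬝ᵥ n = 1) (hu : n ⬝ᵥ u = 0) (hx : n ⬝ᵥ x = 0)
    (h : u ⬝ᵥ u = x ⬝ᵥ x) : ∃ t : ℝ, Real.cos t • u + Real.sin t • n ⨯₃ u = x := by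
  rcases eq_or_ne (u ⬝ᵥ u) 0 with h0 | hρ
  · obtain rfl : u = 0 := dotProduct_self_eq_zero.1 h0
    obtain rfl : x = 0 := dotProduct_self_eq_zero.1 (h ▸ h0)
    exact ⟨0, by simp⟩
  have hvv : n ⨯₃ u ⬝ᵥ n ⨯₃ u = u ⬝ᵥ u := by
    simp [cross_dot_cross, hn, hu, dotProduct_comm u n]
  have huv : u ⬝ᵥ n ⨯₃ u = 0 := dot_cross_self n u
  have hexp := dotProduct_self_smul_eq_of_orthogonal hn hu hx
  have hcs : (x ⬝ᵥ u / (u ⬝ᵥ u)) ^ 2 + (x ⬝ᵥ n ⨯₃ u / (u ⬝ᵥ u)) ^ 2 = 1 := by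
    have hsq := congrArg (fun y => y ⬝ᵥ y) hexp
    simp only [add_dotProduct, dotProduct_add, smul_dotProduct, dotProduct_smul, smul_eq_mul,
      hvv, huv, dotProduct_comm (n ⨯₃ u) u, ← h] at hsq
    have hsum : (x ⬝ᵥ u) ^ 2 + (x ⬝ᵥ n ⨯₃ u) ^ 2 = (u ⬝ᵥ u) ^ 2 :=
      mul_left_cancel₀ hρ (by linear_combination -hsq)
    rw [div_pow, div_pow, ← add_div, hsum, div_self (pow_ne_zero 2 hρ)]
  obtain ⟨t, hc, hs⟩ := exists_cos_sin_eq hcs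
  refine ⟨t, ?_⟩
  rw [hc, hs, div_eq_inv_mul, div_eq_inv_mul, mul_smul, mul_smul, ← smul_add, ← hexp, smul_smul,
    inv_mul_cancel₀ hρ, one_smul]

def rotAbout (n : R3) (t : ℝ) (w : R3) : R3 :=
  (n ⬝ᵥ w) • n + Real.cos t • (w - (n ⬝ᵥ w) • n) + Real.sin t • n ⨯₃ w

lemma rotAbout_zero (n w : R3) : rotAbout n 0 w = w := by simp [rotAbout]

lemma hasDerivAt_rotAbout (hn : n ⬝ᵥ n = 1) (w : R3) (t : ℝ) :
    HasDerivAt (fun t => rotAbout n t w) (n ⨯₃ rotAbout n t w) t := by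
  have h := (((Real.hasDerivAt_cos t).smul_const (w - (n ⬝ᵥ w) • n)).const_add
    ((n ⬝ᵥ w) • n)).fun_add ((Real.hasDerivAt_sin t).smul_const (n ⨯₃ w))
  refine h.congr_deriv ?_
  simp only [rotAbout, map_add, map_smul, map_sub, cross_self, cross_cross_eq_smul_sub_smul', hn]
  module

lemma exists_rotAbout_eq (hn : n ⬝ᵥ n = 1) {w w' : R3} (h1 : n ⬝ᵥ w = n ⬝ᵥ w')
    (h2 : w ⬝ᵥ w = w' ⬝ᵥ w') : ∃ t : ℝ, rotAbout n t w = w' := by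
  have hu : n ⬝ᵥ (w - (n ⬝ᵥ w) • n) = 0 := by simp [dotProduct_sub, hn]
  have hu' : n ⬝ᵥ (w' - (n ⬝ᵥ w) • n) = 0 := by simp [dotProduct_sub, hn, h1]
  have huu : (w - (n ⬝ᵥ w) • n) ⬝ᵥ (w - (n ⬝ᵥ w) • n) =
      (w' - (n ⬝ᵥ w) • n) ⬝ᵥ (w' - (n ⬝ᵥ w) • n) := by
    simp only [sub_dotProduct, dotProduct_sub, smul_dotProduct, dotProduct_smul, smul_eq_mul,
      dotProduct_comm w n, dotProduct_comm w' n, hn, h2, h1]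
  obtain ⟨t, ht⟩ := exists_cos_smul_add_sin_smul_eq hn hu hu' huu
  refine ⟨t, ?_⟩
  rw [rotAbout, add_assoc, ← eq_sub_iff_add_eq', ← ht]
  simp [cross_self]

lemma eq_of_fderiv_cross_eq_zero {g : R3 → ℝ} (hg : Differentiable ℝ g) (hn : n ⬝ᵥ n = 1)
    (h : ∀ σ, fderiv ℝ g σ (n ⨯₃ σ) = 0) {w w' : R3} (h1 : n ⬝ᵥ w = n ⬝ᵥ w')
    (h2 : w ⬝ᵥ w = w' ⬝ᵥ w') : g w = g w' := by
  obtain ⟨t, rfl⟩ := exists_rotAbout_eq hn h1 h2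
  have hd (τ : ℝ) : HasDerivAt (fun τ => g (rotAbout n τ w)) 0 τ := by
    have := (hg _).hasFDerivAt.comp_hasDerivAt τ (hasDerivAt_rotAbout hn w τ)
    rwa [h] at this
  simpa [rotAbout_zero] using
    is_const_of_deriv_eq_zero (fun τ => (hd τ).differentiableAt) (fun τ => (hd τ).deriv) 0 t

end Rotation

lemma continuousLinearMap_apply_eq_dotProduct {ι : Type*} [Fintype ι] [DecidableEq ι]
    (L : (ι → ℝ) →L[ℝ] ℝ) (v : ι → ℝ) :
    L v = (fun a => L (Pi.single a 1)) ⬝ᵥ v := by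
  conv_lhs => rw [pi_eq_sum_univ' v, map_sum]
  simp [dotProduct, mul_comm]

lemma fderiv_apply_x (f : Phase → ℝ) (γ : Phase) (v : R3) :
    fderiv ℝ f γ (v, 0, 0) = dX f γ ⬝ᵥ v :=
  continuousLinearMap_apply_eq_dotProduct ((fderiv ℝ f γ).comp (.inl ℝ R3 (R3 × R3))) v

lemma fderiv_apply_s (f : Phase → ℝ) (γ : Phase) (w : R3) :
    fderiv ℝ f γ (0, 0, w) = dS f γ ⬝ᵥ w :=
  continuousLinearMap_apply_eq_dotProduct
    ((fderiv ℝ f γ).comp ((ContinuousLinearMap.inr ℝ R3 (R3 × R3)).comp (.inr ℝ R3 R3))) w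

lemma fderiv_Pgen_apply (a : Fin 3) (γ v : Phase) : fderiv ℝ (Pgen a) γ v = v.2.1 a := by
  let L : Phase →L[ℝ] ℝ := (ContinuousLinearMap.proj a).comp
    ((ContinuousLinearMap.fst ℝ R3 R3).comp (.snd ℝ R3 (R3 × R3)))
  have hL : HasFDerivAt (Pgen a) L γ := L.hasFDerivAt
  rw [hL.fderiv]
  rfl

lemma dX_Pgen (a : Fin 3) (γ : Phase) : dX (Pgen a) γ = 0 := by
  ext b; simp [dX, fderiv_Pgen_apply]

lemma dP_Pgen (a : Fin 3) (γ : Phase) : dP (Pgen a) γ = Pi.single a 1 := by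
  ext b; simp [dP, fderiv_Pgen_apply, Pi.single_apply, eq_comm]

lemma dS_Pgen (a : Fin 3) (γ : Phase) : dS (Pgen a) γ = 0 := by
  ext b; simp [dS, fderiv_Pgen_apply]

lemma pb_Pgen_left (a : Fin 3) (g : Phase → ℝ) (γ : Phase) : pb (Pgen a) g γ = -dX g γ a := by
  simp [pb, dot3_eq_dotProduct, cross3_eq_crossProduct, dX_Pgen, dP_Pgen, dS_Pgen]

def unitDir (p : R3) : R3 := (norm3 p)⁻¹ • p

lemma norm3_ne_zero {p : R3} (hp : p ≠ 0) : norm3 p ≠ 0 :=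
  (Real.sqrt_ne_zero (Finset.sum_nonneg fun a _ => mul_self_nonneg (p a))).2
    (mt dotProduct_self_eq_zero.1 hp)

lemma sq_norm3 (p : R3) : norm3 p ^ 2 = p ⬝ᵥ p :=
  Real.sq_sqrt (Finset.sum_nonneg fun a _ => mul_self_nonneg (p a))

lemma unitDir_dotProduct_self {p : R3} (hp : p ≠ 0) : unitDir p ⬝ᵥ unitDir p = 1 := by
  rw [unitDir, smul_dotProduct, dotProduct_smul, smul_eq_mul, smul_eq_mul, ← sq_norm3]
  field_simp [norm3_ne_zero hp]

lemma hfun_eq (γ : Phase) : hfun γ = unitDir γ.2.1 ⬝ᵥ γ.2.2 := by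
  rw [hfun, unitDir, smul_dotProduct, smul_eq_mul, div_eq_inv_mul, dot3_eq_dotProduct]

lemma differentiableAt_hfun {γ : Phase} (hγ : γ ∈ PhaseStar) : DifferentiableAt ℝ hfun γ := by
  have hpp : ∑ a, γ.2.1 a * γ.2.1 a ≠ 0 := mt dotProduct_self_eq_zero.1 hγ
  have hnorm : √(∑ a, γ.2.1 a * γ.2.1 a) ≠ 0 := norm3_ne_zero hγ
  unfold hfun norm3 dot3
  fun_prop (disch := assumption)

lemma dX_hfun {γ : Phase} (hγ : γ ∈ PhaseStar) : dX hfun γ = 0 := by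
  ext a
  refine ((differentiableAt_hfun hγ).hasFDerivAt.hasLineDerivAt _).unique ?_
  unfold HasLineDerivAt
  simp_rw [hfun_eq]
  simpa using hasDerivAt_const (0 : ℝ) (unitDir γ.2.1 ⬝ᵥ γ.2.2)

lemma dS_hfun {γ : Phase} (hγ : γ ∈ PhaseStar) : dS hfun γ = unitDir γ.2.1 := by
  ext a
  refine ((differentiableAt_hfun hγ).hasFDerivAt.hasLineDerivAt _).unique ?_
  unfold HasLineDerivAt
  simp_rw [hfun_eq]
  simpa [dotProduct_add] using ((hasDerivAt_id (0 : ℝ)).smul_const (unitDir γ.2.1 a)).const_add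
    (unitDir γ.2.1 ⬝ᵥ γ.2.2)

lemma pb_hfun_left {g : Phase → ℝ} {γ : Phase} (hγ : γ ∈ PhaseStar) (hg : dX g γ = 0) :
    pb hfun g γ = -fderiv ℝ g γ (0, 0, unitDir γ.2.1 ⨯₃ γ.2.2) := by
  rw [pb, dX_hfun hγ, hg, dS_hfun hγ, fderiv_apply_s, dot3_eq_dotProduct, dot3_eq_dotProduct,
    dot3_eq_dotProduct, cross3_eq_crossProduct, triple_product_permutation,
    triple_product_permutation, ← cross_anticomm, dotProduct_neg]
  simp

lemma isOpen_phaseStar : IsOpen PhaseStar :=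
  isOpen_ne_fun (by fun_prop) continuous_const

section Invariance

variable {f : Phase → ℝ} {x p : R3}

lemma eq_of_dX_eq_zero {s : R3} (hf : ∀ y, DifferentiableAt ℝ f (y, p, s))
    (hX : ∀ y, dX f (y, p, s) = 0) (y y' : R3) : f (y, p, s) = f (y', p, s) := by
  have hd (z : R3) : HasFDerivAt (fun y => f (y, p, s))
      ((fderiv ℝ f (z, p, s)).comp (.inl ℝ R3 (R3 × R3))) z :=
    (hf z).hasFDerivAt.comp z (hasFDerivAt_prodMk_left z (p, s))
  refine is_const_of_fderiv_eq_zero (fun z => (hd z).differentiableAt) (fun z => ?_) y y'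
  ext v
  rw [(hd z).fderiv]
  exact (fderiv_apply_x f _ v).trans (by simp [hX])

lemma eq_of_fderiv_rotation_eq_zero (hf : ∀ σ, DifferentiableAt ℝ f (x, p, σ)) {n : R3}
    (hn : n ⬝ᵥ n = 1) (hrot : ∀ σ, fderiv ℝ f (x, p, σ) (0, 0, n ⨯₃ σ) = 0) {s s' : R3}
    (h1 : n ⬝ᵥ s = n ⬝ᵥ s') (h2 : s ⬝ᵥ s = s' ⬝ᵥ s') : f (x, p, s) = f (x, p, s') := by
  have hd (σ : R3) : HasFDerivAt (fun σ => f (x, p, σ))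
      ((fderiv ℝ f (x, p, σ)).comp
        ((ContinuousLinearMap.inr ℝ R3 (R3 × R3)).comp (.inr ℝ R3 R3))) σ :=
    (hf σ).hasFDerivAt.comp σ
      ((hasFDerivAt_prodMk_right x (p, σ)).comp σ (hasFDerivAt_prodMk_right p σ))
  refine eq_of_fderiv_cross_eq_zero (fun σ => (hd σ).differentiableAt) hn (fun σ => ?_) h1 h2
  rw [(hd σ).fderiv]
  exact hrot σ

lemma dX_eq_zero_of_pb_Pgen {γ : Phase} (h : ∀ a, pb (Pgen a) f γ = 0) : dX f γ = 0 := by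
  ext a
  simpa [pb_Pgen_left] using h a

lemma eq_of_pb_Pgen_of_pb_hfun (hf : ContDiffOn ℝ 1 f PhaseStar)
    (hP : ∀ a, ∀ γ ∈ PhaseStar, pb (Pgen a) f γ = 0) (hH : ∀ γ ∈ PhaseStar, pb hfun f γ = 0)
    {x' s s' : R3} (hp : p ≠ 0) (h1 : hfun (x, p, s) = hfun (x', p, s'))
    (h2 : norm3 s = norm3 s') : f (x, p, s) = f (x', p, s') := by
  have hd {γ : Phase} (hγ : γ ∈ PhaseStar) : DifferentiableAt ℝ f γ :=
    (hf.differentiableOn one_ne_zero).differentiableAt (isOpen_phaseStar.mem_nhds hγ)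
  have hX {γ : Phase} (hγ : γ ∈ PhaseStar) : dX f γ = 0 :=
    dX_eq_zero_of_pb_Pgen fun a => hP a γ hγ
  calc f (x, p, s) = f (x', p, s) := eq_of_dX_eq_zero (fun _ => hd hp) (fun _ => hX hp) x x'
    _ = f (x', p, s') := by
      refine eq_of_fderiv_rotation_eq_zero (fun _ => hd hp) (unitDir_dotProduct_self hp)
        (fun σ => ?_) (by simpa [hfun_eq] using h1) (by rw [← sq_norm3, h2, sq_norm3])
      have hσ : (x', p, σ) ∈ PhaseStar := hp
      simpa [pb_hfun_left hσ (hX hσ)] using hH _ hσ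

end Invariance

theorem statement19 :
    (∀ a b : Fin 3, ∀ γ ∈ PhaseStar, pb (Pgen a) (Pgen b) γ = 0) ∧
    (∀ a : Fin 3, ∀ γ ∈ PhaseStar, pb (Pgen a) hfun γ = 0) ∧
    (∀ f : Phase → ℝ, ContDiffOn ℝ 1 f PhaseStar →
      (∀ a : Fin 3, ∀ γ ∈ PhaseStar, pb (Pgen a) f γ = 0) →
      (∀ γ ∈ PhaseStar, pb hfun f γ = 0) →
      ∃ F : R3 → ℝ → ℝ → ℝ, ∀ x p s : R3, p ≠ 0 →
        f (x, p, s) = F p (dot3 p s / norm3 p) (norm3 s)) := by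
  refine ⟨fun a b γ _ => by simp [pb_Pgen_left, dX_Pgen],
    fun a γ hγ => by simp [pb_Pgen_left, dX_hfun hγ], fun f hf hP hH => ?_⟩
  have hfactor : Function.FactorsThrough (fun γ : PhaseStar => f γ)
      (fun γ => (γ.1.2.1, hfun γ.1, norm3 γ.1.2.2)) := by
    rintro ⟨⟨x, p, s⟩, hp : p ≠ 0⟩ ⟨⟨x', p', s'⟩, _⟩ h
    simp only [Prod.mk.injEq] at h
    obtain ⟨rfl, h1, h2⟩ := h
    exact eq_of_pb_Pgen_of_pb_hfun hf hP hH hp h1 h2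
  exact ⟨fun p h r => Function.extend (fun γ : PhaseStar => (γ.1.2.1, hfun γ.1, norm3 γ.1.2.2))
      (fun γ => f γ) 0 (p, h, r),
    fun x p s hp => (hfactor.extend_apply _ ⟨(x, p, s), hp⟩).symm⟩
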